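/- arXiv:1804.03456 — 3 statements merged into one kernel-verified Lean document; each statement's English description precedes it below -/
import Mathlib

section
/- Let a, b be integers with 1 ≤ a < b and 1/2 ≤ Σ_{k=a}^{b-1} 1/(k+2) ≤ 1. Set α_k = 2^{k/2}/√(k+2) for integers k ≥ 0 and define w(t) = max_{a ≤ k < b} α_k·1_{(0,2^{-k}]}(t) for 0 < t ≤ 1. Then 1/4 ≤ ∫_0^1 w(t)² dt ≤ 1, i.e. 1/2 ≤ ‖w‖_{L²(0,1)} ≤ 1. -/
/-!
Write `w = max_k α_k 1_{A_k}` with nested sets `A_k = (0, 2^{-k}]`. Pointwise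
`w² ≤ ∑_k α_k² 1_{A_k}`, while on each dyadic annulus `A_k \ A_{k+1}` (these are disjoint) we
have `w ≥ α_k`. Since `|A_k| = 2^{-k}`, `|A_k \ A_{k+1}| = 2^{-k-1}` and `α_k² 2^{-k} = 1/(k+2)`,
the two bounds are `∑ 1/(k+2) ≤ 1` and `½ ∑ 1/(k+2) ≥ 1/4`.
-/

open MeasureTheory Set
open scoped ENNReal

theorem Antitone.pairwiseDisjoint_sdiff_succ {α : Type*} {A : ℕ → Set α} (hA : Antitone A)
    (s : Set ℕ) : s.PairwiseDisjoint fun k => A k \ A (k + 1) := by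
  refine ((pairwise_disjoint_on _).mpr fun k l hkl => ?_).set_pairwise s
  exact disjoint_left.mpr fun x hxk hxl => hxk.2 (hA hkl hxl.1)

section StepMax

variable {α : Type*} {s : Finset ℕ} (hs : s.Nonempty) (c : ℕ → ℝ)
  (A : ℕ → Set α)

noncomputable def stepMax (x : α) : ℝ :=
  s.sup' hs fun k => c k * (A k).indicator (fun _ => (1 : ℝ)) x

theorem le_stepMax {k : ℕ} (hk : k ∈ s) {x : α} (hx : x ∈ A k) : c k ≤ stepMax hs c A x := by
  have hle := s.le_sup' (fun k => c k * (A k).indicator (fun _ => (1 : ℝ)) x) hk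
  rwa [indicator_of_mem hx, mul_one] at hle

theorem stepMax_sq_le_sum (x : α) :
    stepMax hs c A x ^ 2 ≤ ∑ k ∈ s, (A k).indicator (fun _ => c k ^ 2) x := by
  obtain ⟨k, hk, hmax⟩ :=
    s.exists_mem_eq_sup' hs fun k => c k * (A k).indicator (fun _ => (1 : ℝ)) x
  have hsq : stepMax hs c A x ^ 2 = (A k).indicator (fun _ => c k ^ 2) x := by
    rw [stepMax, hmax]
    by_cases hx : x ∈ A k <;> simp [hx]
  rw [hsq]
  exact Finset.single_le_sum (f := fun k => (A k).indicator (fun _ => c k ^ 2) x)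
    (fun j _ => indicator_nonneg (fun _ _ => sq_nonneg (c j)) x) hk

theorem lintegral_stepMax_sq_le [MeasurableSpace α] (μ : Measure α)
    (hA : ∀ k, MeasurableSet (A k)) :
    ∫⁻ x, ENNReal.ofReal (stepMax hs c A x ^ 2) ∂μ ≤
      ∑ k ∈ s, ENNReal.ofReal (c k ^ 2) * μ (A k) := by
  have hpt : ∀ x, ENNReal.ofReal (stepMax hs c A x ^ 2) ≤
      ∑ k ∈ s, (A k).indicator (fun _ => ENNReal.ofReal (c k ^ 2)) x := fun x =>
    calc ENNReal.ofReal (stepMax hs c A x ^ 2)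
        ≤ ENNReal.ofReal (∑ k ∈ s, (A k).indicator (fun _ => c k ^ 2) x) :=
          ENNReal.ofReal_le_ofReal (stepMax_sq_le_sum hs c A x)
      _ = ∑ k ∈ s, (A k).indicator (fun _ => ENNReal.ofReal (c k ^ 2)) x := by
          rw [ENNReal.ofReal_sum_of_nonneg fun k _ => indicator_nonneg (fun _ _ => sq_nonneg _) x]
          refine Finset.sum_congr rfl fun k _ => ?_
          by_cases hx : x ∈ A k <;> simp [hx]
  calc ∫⁻ x, ENNReal.ofReal (stepMax hs c A x ^ 2) ∂μ
      ≤ ∫⁻ x, ∑ k ∈ s, (A k).indicator (fun _ => ENNReal.ofReal (c k ^ 2)) x ∂μ :=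
        lintegral_mono hpt
    _ = ∑ k ∈ s, ENNReal.ofReal (c k ^ 2) * μ (A k) := by
        rw [lintegral_finsetSum _ fun k _ => measurable_const.indicator (hA k)]
        exact Finset.sum_congr rfl fun k _ => lintegral_indicator_const (hA k) _

theorem sum_le_lintegral_stepMax_sq [MeasurableSpace α] (μ : Measure α) (hc : ∀ k, 0 ≤ c k)
    (hA : Antitone A) (hAm : ∀ k, MeasurableSet (A k)) :
    ∑ k ∈ s, ENNReal.ofReal (c k ^ 2) * μ (A k \ A (k + 1)) ≤
      ∫⁻ x, ENNReal.ofReal (stepMax hs c A x ^ 2) ∂μ :=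
  calc ∑ k ∈ s, ENNReal.ofReal (c k ^ 2) * μ (A k \ A (k + 1))
      = ∑ k ∈ s, ∫⁻ _ in A k \ A (k + 1), ENNReal.ofReal (c k ^ 2) ∂μ :=
        Finset.sum_congr rfl fun _ _ => (setLIntegral_const _ _).symm
    _ ≤ ∑ k ∈ s, ∫⁻ x in A k \ A (k + 1), ENNReal.ofReal (stepMax hs c A x ^ 2) ∂μ :=
        Finset.sum_le_sum fun k hk => setLIntegral_mono' ((hAm k).diff (hAm (k + 1)))
          fun _ hx => ENNReal.ofReal_le_ofReal
            (pow_le_pow_left₀ (hc k) (le_stepMax hs c A hk hx.1) 2)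
    _ = ∫⁻ x in ⋃ k ∈ s, A k \ A (k + 1), ENNReal.ofReal (stepMax hs c A x ^ 2) ∂μ :=
        (lintegral_biUnion_finset (hA.pairwiseDisjoint_sdiff_succ _)
          (fun k _ => (hAm k).diff (hAm (k + 1))) _).symm
    _ ≤ ∫⁻ x, ENNReal.ofReal (stepMax hs c A x ^ 2) ∂μ := setLIntegral_le_lintegral _ _

end StepMax

theorem zpow_neg_natCast_le_one (k : ℕ) : (2 : ℝ) ^ (-(k : ℤ)) ≤ 1 :=
  zpow_le_one_of_nonpos₀ one_le_two (by omega)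

theorem antitone_Ioc_zero_zpow_neg : Antitone fun k : ℕ => Ioc (0 : ℝ) (2 ^ (-(k : ℤ))) :=
  fun _ _ hkl => Ioc_subset_Ioc_right (zpow_le_zpow_right₀ one_le_two (by omega))

theorem volume_restrict_Ioc_zero_zpow_neg (k : ℕ) :
    volume.restrict (Ioc (0 : ℝ) 1) (Ioc 0 (2 ^ (-(k : ℤ)))) = ENNReal.ofReal (2 ^ (-(k : ℤ))) := by
  rw [Measure.restrict_eq_self _ (Ioc_subset_Ioc_right (zpow_neg_natCast_le_one k)),
    Real.volume_Ioc, sub_zero]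

theorem volume_restrict_dyadic_annulus (k : ℕ) :
    volume.restrict (Ioc (0 : ℝ) 1)
        (Ioc 0 (2 ^ (-(k : ℤ))) \ Ioc 0 (2 ^ (-((k + 1 : ℕ) : ℤ)))) =
      ENNReal.ofReal (2 ^ (-(k : ℤ)) / 2) := by
  have hhalf : (2 : ℝ) ^ (-((k + 1 : ℕ) : ℤ)) = 2 ^ (-(k : ℤ)) / 2 := by
    rw [Nat.cast_succ, neg_add, zpow_add₀ two_ne_zero, zpow_neg_one, div_eq_mul_inv]
  rw [measure_sdiff (antitone_Ioc_zero_zpow_neg k.le_succ) measurableSet_Ioc.nullMeasurableSet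
      (by rw [volume_restrict_Ioc_zero_zpow_neg]; exact ENNReal.ofReal_ne_top),
    volume_restrict_Ioc_zero_zpow_neg, volume_restrict_Ioc_zero_zpow_neg,
    ← ENNReal.ofReal_sub _ (by positivity), hhalf, sub_half]

theorem rpow_div_sqrt_sq_mul_zpow_neg (k : ℕ) :
    ((2 : ℝ) ^ ((k : ℝ) / 2) / Real.sqrt (k + 2)) ^ 2 * 2 ^ (-(k : ℤ)) = 1 / (k + 2) := by
  rw [div_pow, Real.sq_sqrt (by positivity), ← Real.rpow_mul_natCast two_pos.le, Nat.cast_ofNat,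
    div_mul_cancel₀ _ two_ne_zero, Real.rpow_natCast, zpow_neg, zpow_natCast]
  field_simp

theorem stmt3_general (a b : ℕ) (hab : a < b)
    (hsum1 : (1 : ℝ) / 2 ≤ ∑ k ∈ Finset.Ico a b, (1 : ℝ) / (k + 2))
    (hsum2 : (∑ k ∈ Finset.Ico a b, (1 : ℝ) / (k + 2)) ≤ 1) :
    ENNReal.ofReal (1 / 4) ≤
      (∫⁻ t in Set.Ioc (0 : ℝ) 1, ENNReal.ofReal
        (((Finset.Ico a b).sup' (Finset.nonempty_Ico.mpr hab) fun k =>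
          (2 : ℝ) ^ ((k : ℝ) / 2) / Real.sqrt (k + 2) *
            (Set.Ioc (0 : ℝ) ((2 : ℝ) ^ (-(k : ℤ)))).indicator (fun _ => (1 : ℝ)) t) ^ 2)) ∧
    (∫⁻ t in Set.Ioc (0 : ℝ) 1, ENNReal.ofReal
        (((Finset.Ico a b).sup' (Finset.nonempty_Ico.mpr hab) fun k =>
          (2 : ℝ) ^ ((k : ℝ) / 2) / Real.sqrt (k + 2) *
            (Set.Ioc (0 : ℝ) ((2 : ℝ) ^ (-(k : ℤ)))).indicator (fun _ => (1 : ℝ)) t) ^ 2)) ≤ 1 := by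
  set α : ℕ → ℝ := fun k => (2 : ℝ) ^ ((k : ℝ) / 2) / Real.sqrt (k + 2)
  have hweight (k : ℕ) (x : ℝ) : ENNReal.ofReal (α k ^ 2) * ENNReal.ofReal (2 ^ (-(k : ℤ)) * x) =
      ENNReal.ofReal (1 / (k + 2) * x) := by
    rw [← ENNReal.ofReal_mul (sq_nonneg _), ← mul_assoc, rpow_div_sqrt_sq_mul_zpow_neg]
  constructor
  · calc ENNReal.ofReal (1 / 4)
        ≤ ENNReal.ofReal (∑ k ∈ Finset.Ico a b, 1 / ((k : ℝ) + 2) * (1 / 2)) :=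
          ENNReal.ofReal_le_ofReal (by rw [← Finset.sum_mul]; linarith)
      _ = ∑ k ∈ Finset.Ico a b, ENNReal.ofReal (α k ^ 2) * volume.restrict (Ioc (0 : ℝ) 1)
            (Ioc 0 (2 ^ (-(k : ℤ))) \ Ioc 0 (2 ^ (-((k + 1 : ℕ) : ℤ)))) := by
          rw [ENNReal.ofReal_sum_of_nonneg fun k _ => by positivity]
          refine Finset.sum_congr rfl fun k _ => ?_
          rw [volume_restrict_dyadic_annulus, div_eq_mul_one_div ((2 : ℝ) ^ (-(k : ℤ))) 2, hweight]
      _ ≤ _ := sum_le_lintegral_stepMax_sq (Finset.nonempty_Ico.mpr hab) α _ _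
          (fun k => by positivity) antitone_Ioc_zero_zpow_neg fun _ => measurableSet_Ioc
  · calc _ ≤ _ := lintegral_stepMax_sq_le (Finset.nonempty_Ico.mpr hab) α _ _
          fun _ => measurableSet_Ioc
      _ = ENNReal.ofReal (∑ k ∈ Finset.Ico a b, 1 / ((k : ℝ) + 2) * 1) := by
          rw [ENNReal.ofReal_sum_of_nonneg fun k _ => by positivity]
          refine Finset.sum_congr rfl fun k _ => ?_
          rw [volume_restrict_Ioc_zero_zpow_neg, ← mul_one ((2 : ℝ) ^ (-(k : ℤ))), hweight]
      _ ≤ 1 := ENNReal.ofReal_le_one.mpr (by simpa using hsum2)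

/-- If `1 ≤ a < b` with `1/2 ≤ ∑_{k=a}^{b-1} 1/(k+2) ≤ 1`, and
`w(t) = max_{a ≤ k < b} α_k·1_{(0,2^{-k}]}(t)` with `α_k = 2^{k/2}/√(k+2)`, then
`1/4 ≤ ∫_0^1 w(t)² dt ≤ 1`. -/
theorem stmt3 (a b : ℕ) (ha : 1 ≤ a) (hab : a < b)
    (hsum1 : (1 : ℝ) / 2 ≤ ∑ k ∈ Finset.Ico a b, (1 : ℝ) / (k + 2))
    (hsum2 : (∑ k ∈ Finset.Ico a b, (1 : ℝ) / (k + 2)) ≤ 1) :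
    ENNReal.ofReal (1 / 4) ≤
      (∫⁻ t in Set.Ioc (0 : ℝ) 1, ENNReal.ofReal
        (((Finset.Ico a b).sup' (Finset.nonempty_Ico.mpr hab) fun k =>
          (2 : ℝ) ^ ((k : ℝ) / 2) / Real.sqrt (k + 2) *
            (Set.Ioc (0 : ℝ) ((2 : ℝ) ^ (-(k : ℤ)))).indicator (fun _ => (1 : ℝ)) t) ^ 2)) ∧
    (∫⁻ t in Set.Ioc (0 : ℝ) 1, ENNReal.ofReal
        (((Finset.Ico a b).sup' (Finset.nonempty_Ico.mpr hab) fun k =>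
          (2 : ℝ) ^ ((k : ℝ) / 2) / Real.sqrt (k + 2) *
            (Set.Ioc (0 : ℝ) ((2 : ℝ) ^ (-(k : ℤ)))).indicator (fun _ => (1 : ℝ)) t) ^ 2)) ≤ 1 :=
  stmt3_general a b hab hsum1 hsum2
end

section
/- Let a, b be integers with 1 ≤ a < b and Σ_{k=a}^{b-1} 1/(k+2) ≤ 1. Set ψ(t) = √t·√(log₂(4/t)) for 0 < t ≤ 1, α_k = 2^{k/2}/√(k+2), and w(t) = max_{a ≤ k < b} α_k·1_{(0,2^{-k}]}(t). Then ∫_0^1 w(t)/ψ(t) dt ≤ 2. -/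
/-!
Bound the maximum by the sum of its terms and integrate term by term. On `(0, 2^{-k}]` one has
`log₂(4/t) ≥ k + 2`, so the `k`-th term of `w/ψ` is at most `2^{k/2}/(k+2) · t^{-1/2}` there;
since `∫_0^c t^{-1/2} dt = 2√c`, the `k`-th term contributes at most `2/(k+2)`, and the
hypothesis bounds the sum of these contributions by `2`.
-/

open MeasureTheory Set
open scoped ENNReal

theorem Finset.sup'_le_sum_of_nonneg {ι M : Type*} [AddCommMonoid M] [LinearOrder M]
    [IsOrderedAddMonoid M] {s : Finset ι} (hs : s.Nonempty) {f : ι → M}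
    (hf : ∀ i ∈ s, 0 ≤ f i) : s.sup' hs f ≤ ∑ i ∈ s, f i :=
  Finset.sup'_le hs f fun _ hi => Finset.single_le_sum hf hi

namespace DyadicWeight

noncomputable def psi (t : ℝ) : ℝ := √t * √(Real.logb 2 (4 / t))

noncomputable def alpha (k : ℕ) : ℝ := 2 ^ ((k : ℝ) / 2) / √(k + 2)

theorem measurable_psi : Measurable psi := by
  unfold psi Real.logb
  fun_prop

theorem le_logb_four_div {k : ℤ} {t : ℝ} (ht : 0 < t) (htk : t ≤ 2 ^ (-k)) :
    k + 2 ≤ Real.logb 2 (4 / t) := by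
  have hscale : (2 : ℝ) ^ k * t ≤ 1 :=
    calc (2 : ℝ) ^ k * t ≤ 2 ^ k * 2 ^ (-k) := by gcongr
      _ = 1 := by rw [← zpow_add₀ two_ne_zero, add_neg_cancel, zpow_zero]
  rw [Real.le_logb_iff_rpow_le one_lt_two (by positivity), le_div_iff₀ ht,
    Real.rpow_add two_pos, Real.rpow_intCast]
  norm_num
  linarith

theorem sqrt_mul_le_psi {k : ℕ} {t : ℝ} (ht : t ∈ Ioc 0 (2 ^ (-(k : ℤ)))) :
    √t * √(k + 2) ≤ psi t := by
  have hlog := le_logb_four_div ht.1 ht.2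
  push_cast at hlog
  exact mul_le_mul_of_nonneg_left (Real.sqrt_le_sqrt hlog) (Real.sqrt_nonneg t)

theorem ofReal_alpha_indicator_div_psi_le (k : ℕ) (t : ℝ) :
    ENNReal.ofReal (alpha k * (Ioc 0 (2 ^ (-(k : ℤ)))).indicator (fun _ => (1 : ℝ)) t / psi t) ≤
      (Ioc 0 (2 ^ (-(k : ℤ)))).indicator
        (fun t => ENNReal.ofReal (2 ^ ((k : ℝ) / 2) / (k + 2)) * ENNReal.ofReal (1 / √t)) t := by
  by_cases ht : t ∈ Ioc 0 (2 ^ (-(k : ℤ)))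
  · have hsqrt : 0 < √t := Real.sqrt_pos.mpr ht.1
    rw [indicator_of_mem ht, indicator_of_mem ht, mul_one, ← ENNReal.ofReal_mul (by positivity)]
    apply ENNReal.ofReal_le_ofReal
    calc alpha k / psi t ≤ alpha k / (√t * √(k + 2)) := by
          unfold alpha
          gcongr
          exact sqrt_mul_le_psi ht
      _ = 2 ^ ((k : ℝ) / 2) / (k + 2) * (1 / √t) := by
          have hk : √((k : ℝ) + 2) ^ 2 = k + 2 := Real.sq_sqrt (by positivity)
          unfold alpha
          field_simp
          rw [hk]
  · rw [indicator_of_notMem ht, indicator_of_notMem ht, mul_zero, zero_div, ENNReal.ofReal_zero]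

theorem lintegral_Ioc_inv_sqrt {c : ℝ} (hc : 0 ≤ c) :
    ∫⁻ t in Ioc 0 c, ENNReal.ofReal (1 / √t) = ENNReal.ofReal (2 * √c) := by
  have hpow : ∀ t ∈ Ioc (0 : ℝ) c,
      ENNReal.ofReal (1 / √t) = ENNReal.ofReal (t ^ (-(1 / 2) : ℝ)) :=
    fun t ht => by rw [Real.sqrt_eq_rpow, Real.rpow_neg ht.1.le, one_div]
  have hint : IntegrableOn (fun t : ℝ => t ^ (-(1 / 2) : ℝ)) (Ioc 0 c) :=
    (intervalIntegrable_iff_integrableOn_Ioc_of_le hc).mp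
      (intervalIntegral.intervalIntegrable_rpow' (by norm_num))
  rw [setLIntegral_congr_fun measurableSet_Ioc hpow,
    ← ofReal_integral_eq_lintegral_ofReal hint
      (ae_restrict_of_forall_mem measurableSet_Ioc fun t ht => Real.rpow_nonneg ht.1.le _),
    ← intervalIntegral.integral_of_le hc, integral_rpow (Or.inl (by norm_num)),
    Real.zero_rpow (by norm_num), Real.sqrt_eq_rpow]
  congr 1
  norm_num
  ring

theorem rpow_half_mul_sqrt_zpow_neg (k : ℕ) :
    (2 : ℝ) ^ ((k : ℝ) / 2) * √(2 ^ (-(k : ℤ))) = 1 := by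
  rw [Real.sqrt_eq_rpow, ← Real.rpow_intCast, ← Real.rpow_mul zero_le_two,
    ← Real.rpow_add two_pos]
  push_cast
  ring_nf
  exact Real.rpow_zero 2

theorem lintegral_alpha_indicator_div_psi_le (k : ℕ) :
    ∫⁻ t in Ioc 0 1,
        ENNReal.ofReal (alpha k * (Ioc 0 (2 ^ (-(k : ℤ)))).indicator (fun _ => (1 : ℝ)) t / psi t)
      ≤ ENNReal.ofReal (2 / (k + 2)) :=
  calc _ ≤ ∫⁻ t, (Ioc 0 (2 ^ (-(k : ℤ)))).indicator
          (fun t => ENNReal.ofReal (2 ^ ((k : ℝ) / 2) / (k + 2)) * ENNReal.ofReal (1 / √t)) t :=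
        (setLIntegral_le_lintegral _ _).trans
          (lintegral_mono (ofReal_alpha_indicator_div_psi_le k))
    _ = ENNReal.ofReal (2 ^ ((k : ℝ) / 2) / (k + 2) * (2 * √(2 ^ (-(k : ℤ))))) := by
        rw [lintegral_indicator measurableSet_Ioc, lintegral_const_mul' _ _ ENNReal.ofReal_ne_top,
          lintegral_Ioc_inv_sqrt (by positivity), ← ENNReal.ofReal_mul (by positivity)]
    _ = ENNReal.ofReal (2 / (k + 2)) := by
        congr 1
        linear_combination (2 / ((k : ℝ) + 2)) * rpow_half_mul_sqrt_zpow_neg k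

theorem lintegral_sup'_div_psi_le {s : Finset ℕ} (hs : s.Nonempty) :
    ∫⁻ t in Ioc 0 1, ENNReal.ofReal ((s.sup' hs fun k =>
        alpha k * (Ioc 0 (2 ^ (-(k : ℤ)))).indicator (fun _ => (1 : ℝ)) t) / psi t)
      ≤ ENNReal.ofReal (2 * ∑ k ∈ s, 1 / ((k : ℝ) + 2)) := by
  set term : ℕ → ℝ → ℝ := fun k t => alpha k * (Ioc 0 (2 ^ (-(k : ℤ)))).indicator (fun _ => 1) t
  have hterm : ∀ k t, 0 ≤ term k t :=
    fun k t => mul_nonneg (by unfold alpha; positivity)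
      (indicator_nonneg (fun _ _ => zero_le_one) t)
  have hmax_le_sum : ∀ t, ENNReal.ofReal ((s.sup' hs fun k => term k t) / psi t) ≤
      ∑ k ∈ s, ENNReal.ofReal (term k t / psi t) := by
    intro t
    have hpsi : 0 ≤ psi t := by unfold psi; positivity
    rw [← ENNReal.ofReal_sum_of_nonneg fun k _ => div_nonneg (hterm k t) hpsi, ← Finset.sum_div]
    exact ENNReal.ofReal_le_ofReal
      (div_le_div_of_nonneg_right (Finset.sup'_le_sum_of_nonneg _ fun k _ => hterm k t) hpsi)
  calc _ ≤ ∫⁻ t in Ioc 0 1, ∑ k ∈ s, ENNReal.ofReal (term k t / psi t) :=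
        lintegral_mono hmax_le_sum
    _ = ∑ k ∈ s, ∫⁻ t in Ioc 0 1, ENNReal.ofReal (term k t / psi t) :=
        lintegral_finsetSum _ fun k _ =>
          ((measurable_const.indicator measurableSet_Ioc).const_mul _
            |>.div measurable_psi).ennreal_ofReal
    _ ≤ ∑ k ∈ s, ENNReal.ofReal (2 / (k + 2)) :=
        Finset.sum_le_sum fun k _ => lintegral_alpha_indicator_div_psi_le k
    _ = ENNReal.ofReal (2 * ∑ k ∈ s, 1 / ((k : ℝ) + 2)) := by
        rw [← ENNReal.ofReal_sum_of_nonneg fun k _ => by positivity, Finset.mul_sum]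
        simp_rw [mul_one_div]

end DyadicWeight

theorem stmt4_general (a b : ℕ) (hab : a < b)
    (hsum : (∑ k ∈ Finset.Ico a b, (1 : ℝ) / (k + 2)) ≤ 1) :
    ∫⁻ t in Set.Ioc (0 : ℝ) 1, ENNReal.ofReal
        (((Finset.Ico a b).sup' (Finset.nonempty_Ico.mpr hab) fun k =>
          (2 : ℝ) ^ ((k : ℝ) / 2) / Real.sqrt (k + 2) *
            (Set.Ioc (0 : ℝ) ((2 : ℝ) ^ (-(k : ℤ)))).indicator (fun _ => (1 : ℝ)) t) /
          (Real.sqrt t * Real.sqrt (Real.logb 2 (4 / t)))) ≤ 2 := by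
  calc _ ≤ ENNReal.ofReal (2 * ∑ k ∈ Finset.Ico a b, 1 / ((k : ℝ) + 2)) :=
        DyadicWeight.lintegral_sup'_div_psi_le _
    _ ≤ 2 := by
        rw [← ENNReal.ofReal_ofNat 2]
        exact ENNReal.ofReal_le_ofReal (by linarith)

/-- If `1 ≤ a < b` with `∑_{k=a}^{b-1} 1/(k+2) ≤ 1`, `ψ(t) = √t·√(log₂(4/t))`,
`α_k = 2^{k/2}/√(k+2)` and `w(t) = max_{a ≤ k < b} α_k·1_{(0,2^{-k}]}(t)`, then
`∫_0^1 w(t)/ψ(t) dt ≤ 2`. -/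
theorem stmt4 (a b : ℕ) (ha : 1 ≤ a) (hab : a < b)
    (hsum : (∑ k ∈ Finset.Ico a b, (1 : ℝ) / (k + 2)) ≤ 1) :
    ∫⁻ t in Set.Ioc (0 : ℝ) 1, ENNReal.ofReal
        (((Finset.Ico a b).sup' (Finset.nonempty_Ico.mpr hab) fun k =>
          (2 : ℝ) ^ ((k : ℝ) / 2) / Real.sqrt (k + 2) *
            (Set.Ioc (0 : ℝ) ((2 : ℝ) ^ (-(k : ℤ)))).indicator (fun _ => (1 : ℝ)) t) /
          (Real.sqrt t * Real.sqrt (Real.logb 2 (4 / t)))) ≤ 2 :=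
  stmt4_general a b hab hsum
end

section
/- Let ψ(t) = √t·√(log₂(4/t)) for 0 < t ≤ 1. For every fixed t with 0 < t ≤ 1, sup_{0 < s ≤ 1} ψ(ts)/ψ(s) = √t · √(1 + (1/2)·log₂(1/t)). -/
/-!
Since `log₂(4/(ts)) = log₂(4/s) + log₂(1/t)`, the quotient `ψ(ts)/ψ(s)` equals
`√t·√(1 + log₂(1/t)/log₂(4/s))`. On `(0,1]` we have `log₂(4/s) ≥ 2` with equality at `s = 1`,
so the supremum is attained at `s = 1`.
-/

open Real Set

noncomputable def psi (s : ℝ) : ℝ := √s * √(logb 2 (4 / s))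

lemma logb_two_four : logb 2 (4 : ℝ) = 2 := by
  rw [show (4 : ℝ) = 2 ^ 2 by norm_num, logb_pow, logb_self_eq_one one_lt_two]
  norm_num

lemma two_le_logb_four_div {s : ℝ} (hs0 : 0 < s) (hs1 : s ≤ 1) : 2 ≤ logb 2 (4 / s) := by
  have h4 : (4 : ℝ) ≤ 4 / s := by rw [le_div_iff₀ hs0]; linarith
  calc (2 : ℝ) = logb 2 4 := logb_two_four.symm
    _ ≤ logb 2 (4 / s) := logb_le_logb_of_le one_lt_two (by norm_num) h4

lemma logb_four_div_mul {t s : ℝ} (ht : 0 < t) (hs : 0 < s) :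
    logb 2 (4 / (t * s)) = logb 2 (4 / s) + logb 2 (1 / t) := by
  rw [show 4 / (t * s) = 4 / s * (1 / t) by field_simp, logb_mul (by positivity) (by positivity)]

lemma psi_mul_div_psi {t s : ℝ} (ht : 0 < t) (hs0 : 0 < s) (hs4 : s < 4) :
    psi (t * s) / psi s = √t * √(1 + logb 2 (1 / t) / logb 2 (4 / s)) := by
  have hL : 0 < logb 2 (4 / s) := logb_pos one_lt_two (by rw [lt_div_iff₀ hs0]; linarith)
  rw [psi, psi, logb_four_div_mul ht hs0, sqrt_mul ht.le, one_add_div hL.ne', sqrt_div' _ hL.le]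
  field_simp

lemma psi_mul_div_psi_le {t s : ℝ} (ht0 : 0 < t) (ht1 : t ≤ 1) (hs0 : 0 < s) (hs1 : s ≤ 1) :
    psi (t * s) / psi s ≤ psi (t * 1) / psi 1 := by
  have hc : 0 ≤ logb 2 (1 / t) := logb_nonneg one_lt_two (by rw [le_div_iff₀ ht0]; linarith)
  rw [psi_mul_div_psi ht0 hs0 (by linarith), psi_mul_div_psi ht0 one_pos (by norm_num),
    div_one, logb_two_four]
  gcongr
  exact two_le_logb_four_div hs0 hs1

/-- With `ψ(t) = √t·√(log₂(4/t))` on `(0,1]`, for every fixed `0 < t ≤ 1`,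
`sup_{0<s≤1} ψ(ts)/ψ(s) = √t·√(1 + (1/2)·log₂(1/t))`. -/
theorem stmt8 (t : ℝ) (ht0 : 0 < t) (ht1 : t ≤ 1) :
    (⨆ s : Set.Ioc (0 : ℝ) 1,
        (Real.sqrt (t * (s : ℝ)) * Real.sqrt (Real.logb 2 (4 / (t * (s : ℝ))))) /
          (Real.sqrt (s : ℝ) * Real.sqrt (Real.logb 2 (4 / (s : ℝ))))) =
      Real.sqrt t * Real.sqrt (1 + (1 / 2) * Real.logb 2 (1 / t)) := by
  change (⨆ s : Ioc (0 : ℝ) 1, psi (t * s) / psi s) = _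
  have hbound (s : Ioc (0 : ℝ) 1) : psi (t * s) / psi s ≤ psi (t * 1) / psi 1 :=
    psi_mul_div_psi_le ht0 ht1 s.2.1 s.2.2
  have hmax : psi (t * 1) / psi 1 = √t * √(1 + 1 / 2 * logb 2 (1 / t)) := by
    rw [psi_mul_div_psi ht0 one_pos (by norm_num), div_one, logb_two_four, div_eq_inv_mul,
      inv_eq_one_div]
  rw [← hmax]
  exact le_antisymm (ciSup_le hbound)
    (le_ciSup_of_le ⟨_, forall_mem_range.2 hbound⟩ ⟨1, one_pos, le_rfl⟩ le_rfl)
end
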